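/- Let D ⊆ ℝ^n, let f, g : D → ℝ, let p_f, p_g, r : ℝ^n → ℝ be polynomial functions, and let I_f, I_g, B_f, B_g, B_r be closed intervals such that for all x ∈ D: f(x) ∈ p_f(x) + I_f, g(x) ∈ p_g(x) + I_g, p_f(x) ∈ B_f, p_g(x) ∈ B_g, and r(x) ∈ B_r. Then for all x ∈ D, f(x)·g(x) ∈ (p_f(x)·p_g(x) − r(x)) + (I_f·B_g + B_f·I_g + I_f·I_g + B_r), where for sets of reals S·T = {s·t : s ∈ S, t ∈ T} and S + T = {s + t : s ∈ S, t ∈ T}. -/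
import Mathlib


open Pointwise

/-- Soundness of order-`k` Taylor model multiplication: if `(p_f, I_f)` and `(p_g, I_g)` are
Taylor model overapproximations of `f` and `g` on `D`, `B_f`, `B_g`, `B_r` are interval
enclosures of the ranges of `p_f`, `p_g` and the truncated part `r` over `D`, then
`(p_f · p_g − r, I_f·B_g + B_f·I_g + I_f·I_g + B_r)` is a Taylor model overapproximation
of `f · g` on `D`. -/
theorem taylor_model_mul_sound (n : ℕ) (D : Set (Fin n → ℝ))
    (f g : (Fin n → ℝ) → ℝ) (pf pg r : MvPolynomial (Fin n) ℝ)
    (lf uf lg ug af bf ag bg ar br : ℝ)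
    (hf : ∀ x ∈ D, f x ∈ ({MvPolynomial.eval x pf} : Set ℝ) + Set.Icc lf uf)
    (hg : ∀ x ∈ D, g x ∈ ({MvPolynomial.eval x pg} : Set ℝ) + Set.Icc lg ug)
    (hBf : ∀ x ∈ D, MvPolynomial.eval x pf ∈ Set.Icc af bf)
    (hBg : ∀ x ∈ D, MvPolynomial.eval x pg ∈ Set.Icc ag bg)
    (hBr : ∀ x ∈ D, MvPolynomial.eval x r ∈ Set.Icc ar br) :
    ∀ x ∈ D, f x * g x ∈
      ({MvPolynomial.eval x pf * MvPolynomial.eval x pg - MvPolynomial.eval x r} : Set ℝ) +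
        (Set.Icc lf uf * Set.Icc ag bg + Set.Icc af bf * Set.Icc lg ug +
          Set.Icc lf uf * Set.Icc lg ug + Set.Icc ar br) := by
  intro x hx
  obtain ⟨a, ha, ef, hef, hfeq⟩ := hf x hx
  obtain ⟨b, hb, eg, heg, hgeq⟩ := hg x hx
  simp only [Set.mem_singleton_iff] at ha hb
  subst ha hb
  refine ⟨_, rfl, ef * MvPolynomial.eval x pg + MvPolynomial.eval x pf * eg + ef * eg +
    MvPolynomial.eval x r, ?_, by rw [← hfeq, ← hgeq]; ring⟩
  exact Set.add_mem_add (Set.add_mem_add (Set.add_mem_add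
    (Set.mul_mem_mul hef (hBg x hx)) (Set.mul_mem_mul (hBf x hx) heg))
    (Set.mul_mem_mul hef heg)) (hBr x hx)
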